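/- arXiv:0810.1442 — 2 statements merged into one kernel-verified Lean document; each statement's English description precedes it below -/
import Mathlib

section
/- Let Q and Q′ be quivers, let r be a family of relations on the hom-sets of the free groupoid on Q and r′ a family of relations on the hom-sets of the free groupoid on Q′, and let π and π′ denote the corresponding quotient functors from the free groupoids to the quotient groupoids. Then every functor F from the quotient of the free groupoid on Q by r to the quotient of the free groupoid on Q′ by r′ lifts to a functor F̃ between the free groupoids such that F̃ followed by π′ equals π followed by F. (This is the content of the paper's Lemma 3.3.2 in the lowest-dimensional track-category case.) -/
open CategoryTheory

namespace Quiver.FreeGroupoid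

variable {V : Type*} [Quiver V]

theorem functor_ext {D : Type*} [Groupoid D] {Φ Ψ : Quiver.FreeGroupoid V ⥤ D}
    (h : of V ⋙q Φ.toPrefunctor = of V ⋙q Ψ.toPrefunctor) : Φ = Ψ := by
  rw [lift_unique _ Φ rfl, lift_unique _ Ψ h.symm]

/-- Since the quotient functor is full and the identity on objects, each generator's image
has a preimage, and the free groupoid lets us extend that choice to a functor. -/
theorem exists_lift_quotient {C : Type*} [Groupoid C] {r : HomRel C}
    (G : Quiver.FreeGroupoid V ⥤ Quotient r) :
    ∃ G' : Quiver.FreeGroupoid V ⥤ C, G' ⋙ Quotient.functor r = G := by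
  let ψ : V ⥤q C :=
    { obj := fun X => (G.obj ((of V).obj X)).as
      map := fun a => (Quotient.functor r).preimage (G.map ((of V).map a)) }
  refine ⟨lift ψ, functor_ext ?_⟩
  change (of V ⋙q (lift ψ).toPrefunctor) ⋙q (Quotient.functor r).toPrefunctor = _
  rw [lift_spec]
  fapply Prefunctor.ext
  · intro X
    rfl
  · intro X Y a
    exact (Quotient.functor r).map_preimage _

end Quiver.FreeGroupoid

/-- Every functor between quotients of free groupoids lifts to a functor between the
free groupoids, commuting with the quotient functors. -/
theorem functor_lift_of_quotient_free_groupoid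
    {Q : Type*} [Quiver Q] {Q' : Type*} [Quiver Q']
    (r : HomRel (Quiver.FreeGroupoid Q)) (r' : HomRel (Quiver.FreeGroupoid Q'))
    (F : CategoryTheory.Quotient r ⥤ CategoryTheory.Quotient r') :
    ∃ F' : Quiver.FreeGroupoid Q ⥤ Quiver.FreeGroupoid Q',
      F' ⋙ CategoryTheory.Quotient.functor r' = CategoryTheory.Quotient.functor r ⋙ F :=
  Quiver.FreeGroupoid.exists_lift_quotient _
end

section
/- For every n ≥ 1, the symmetric group on Fin n is isomorphic to the group presented by generators g₁, …, g_{n−1} subject to the relations gᵢ² = 1 for all i, gᵢ gⱼ = gⱼ gᵢ whenever |i − j| ≥ 2, and gᵢ g_{i+1} gᵢ = g_{i+1} gᵢ g_{i+1} for all i, via the morphism sending gᵢ to the adjacent transposition tᵢ₋₁; that is, the induced homomorphism from this presented group to Equiv.Perm (Fin n) is a group isomorphism. -/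
/-- The Coxeter-style relators for the symmetric group: squares of the generators,
commutation of distant generators, and the braid (Yang-Baxter) relations. -/
def symmRels (m : ℕ) : Set (FreeGroup (Fin m)) :=
  {w | (∃ i : Fin m, w = (FreeGroup.of i) ^ 2) ∨
    (∃ i j : Fin m, 2 ≤ Nat.dist i.val j.val ∧
      w = FreeGroup.of i * FreeGroup.of j * (FreeGroup.of i)⁻¹ * (FreeGroup.of j)⁻¹) ∨
    (∃ i j : Fin m, j.val = i.val + 1 ∧
      w = FreeGroup.of i * FreeGroup.of j * FreeGroup.of i *
        (FreeGroup.of j * FreeGroup.of i * FreeGroup.of j)⁻¹)}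

/-!
The swaps `(i, i+1)` satisfy the relations and generate `Perm (Fin (m + 1))`, so the induced
map from the presented group `G m` is onto, and it suffices to show `|G m| ≤ (m + 1)!`.
In `G (m + 1)` let `H` be the image of `G m` (generated by `g₀, …, g_{m-1}`). Right
multiplication by any generator permutes the `m + 2` right cosets `H * (g_m g_{m-1} ⋯ g_k)`,
`0 ≤ k ≤ m + 1` (by commutation, `gᵢ² = 1` or the braid relation, according to the position of
`i` relative to `k`), so these cosets cover `G (m + 1)` and `|G (m + 1)| ≤ (m + 2) |G m|`.
-/

section DescProd

variable {G : Type*} [Group G] (s : ℕ → G)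

def descProd (k : ℕ) : ℕ → G
  | 0 => 1
  | n + 1 => s (k + n) * descProd k n

theorem descProd_add (k a b : ℕ) :
    descProd s k (a + b) = descProd s (k + a) b * descProd s k a := by
  induction b with
  | zero => simp [descProd]
  | succ b ih => rw [← add_assoc, descProd, ih, descProd, add_assoc, mul_assoc]

theorem descProd_succ' (k n : ℕ) : descProd s k (n + 1) = descProd s (k + 1) n * s k := by
  rw [add_comm, descProd_add]
  simp [descProd]

theorem Commute.descProd_right {x : G} {k n : ℕ}
    (h : ∀ j, k ≤ j → j < k + n → Commute x (s j)) : Commute x (descProd s k n) := by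
  induction n with
  | zero => exact Commute.one_right x
  | succ n ih => exact (h _ (by omega) (by omega)).mul_right (ih fun j hk hj ↦ h j hk (by omega))

theorem descProd_mul_of_braid {k l n : ℕ} (hln : l + 1 < n)
    (hcomm : ∀ i j, i + 2 ≤ j → Commute (s i) (s j))
    (hbraid : s (k + l) * s (k + l + 1) * s (k + l) =
      s (k + l + 1) * s (k + l) * s (k + l + 1)) :
    descProd s k n * s (k + l + 1) = s (k + l) * descProd s k n := by
  obtain ⟨r, rfl⟩ : ∃ r, n = (l + 2) + r := ⟨n - (l + 2), by omega⟩
  have hV : Commute (s (k + l)) (descProd s (k + (l + 2)) r) :=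
    Commute.descProd_right s fun j hj _ ↦ hcomm _ _ (by omega)
  have hW : Commute (s (k + l + 1)) (descProd s k l) :=
    Commute.descProd_right s fun j _ hj ↦ (hcomm _ _ (by omega)).symm
  rw [descProd_add, descProd, descProd, ← add_assoc]
  set A := s (k + l)
  set B := s (k + l + 1)
  set V := descProd s (k + (l + 2)) r
  set W := descProd s k l
  calc V * (B * (A * W)) * B
      = V * (B * A * (W * B)) := by group
    _ = V * (B * A * B) * W := by rw [← hW.eq]; group
    _ = V * A * (B * A * W) := by rw [← hbraid]; group
    _ = A * (V * (B * (A * W))) := by rw [← hV.eq]; group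

end DescProd

namespace symmRels

open Nat PresentedGroup

variable {m : ℕ}

theorem of_mul_self (i : Fin m) : (of i : PresentedGroup (symmRels m)) * of i = 1 := by
  have := one_of_mem (rels := symmRels m) (Or.inl ⟨i, rfl⟩)
  rwa [map_pow, sq] at this

theorem commute_of {i j : Fin m} (h : 2 ≤ Nat.dist i j) :
    Commute (of i : PresentedGroup (symmRels m)) (of j) := by
  have := one_of_mem (rels := symmRels m) (Or.inr (Or.inl ⟨i, j, h, rfl⟩))
  simp only [map_mul, map_inv] at this
  exact commutatorElement_eq_one_iff_commute.mp this

theorem of_braid {i j : Fin m} (h : j.val = i.val + 1) :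
    (of i : PresentedGroup (symmRels m)) * of j * of i = of j * of i * of j :=
  mk_eq_mk_of_mul_inv_mem (Or.inr (Or.inr ⟨i, j, h, rfl⟩))

def gen (m i : ℕ) : PresentedGroup (symmRels m) :=
  if h : i < m then of ⟨i, h⟩ else 1

theorem gen_of_lt {i : ℕ} (h : i < m) : gen m i = of ⟨i, h⟩ := dif_pos h

theorem gen_mul_self (i : ℕ) : gen m i * gen m i = 1 := by
  unfold gen
  split
  · exact of_mul_self _
  · exact mul_one 1

theorem commute_gen {i j : ℕ} (h : i + 2 ≤ j) : Commute (gen m i) (gen m j) := by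
  by_cases hj : j < m
  · rw [gen_of_lt (by omega : i < m), gen_of_lt hj]
    exact commute_of (by simp only [Nat.dist]; omega)
  · simp only [gen, dif_neg hj, Commute.one_right]

theorem gen_braid {i : ℕ} (h : i + 1 < m) :
    gen m i * gen m (i + 1) * gen m i = gen m (i + 1) * gen m i * gen m (i + 1) := by
  rw [gen_of_lt (by omega : i < m), gen_of_lt h]
  exact of_braid rfl

theorem lift_swap_eq_one_of_mem :
    ∀ r ∈ symmRels m, FreeGroup.lift (fun i : Fin m ↦ Equiv.swap i.castSucc i.succ) r = 1 := by
  rintro r (⟨i, rfl⟩ | ⟨i, j, hd, rfl⟩ | ⟨i, j, hs, rfl⟩)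
  · simp [sq]
  · simp only [map_mul, map_inv, FreeGroup.lift_apply_of]
    refine commutatorElement_eq_one_iff_commute.mpr (Equiv.Perm.Disjoint.commute ?_)
    apply Equiv.Perm.disjoint_swap_swap
    unfold Nat.dist at hd
    grind [Fin.ext_iff, List.nodup_cons]
  · have hj : j.castSucc = i.succ := Fin.ext (by simp [hs])
    simp only [map_mul, map_inv, FreeGroup.lift_apply_of, hj, mul_inv_eq_one]
    have hab : i.castSucc ≠ i.succ := Fin.castSucc_lt_succ.ne
    have hac : i.castSucc ≠ j.succ := by
      simp only [ne_eq, Fin.ext_iff, Fin.val_castSucc, Fin.val_succ, hs]; omega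
    have hbc : i.succ ≠ j.succ := by simp [Fin.ext_iff, hs]
    rw [Equiv.swap_mul_swap_mul_swap hab hac, Equiv.swap_comm i.castSucc i.succ,
      Equiv.swap_comm i.succ j.succ,
      Equiv.swap_mul_swap_mul_swap hbc.symm hac.symm, Equiv.swap_comm]

def toPerm (m : ℕ) : PresentedGroup (symmRels m) →* Equiv.Perm (Fin (m + 1)) :=
  toGroup lift_swap_eq_one_of_mem

theorem toPerm_of (i : Fin m) : toPerm m (of i) = Equiv.swap i.castSucc i.succ :=
  toGroup.of lift_swap_eq_one_of_mem

theorem toPerm_surjective (m : ℕ) : Function.Surjective (toPerm m) := by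
  rw [← MonoidHom.mrange_eq_top, eq_top_iff, ← Equiv.Perm.mclosure_swap_castSucc_succ,
    Submonoid.closure_le]
  rintro _ ⟨i, rfl⟩
  exact ⟨of i, toPerm_of i⟩

theorem castSucc_mapsTo :
    Set.MapsTo (FreeGroup.map Fin.castSucc) (symmRels m) (symmRels (m + 1)) := by
  rintro r (⟨i, rfl⟩ | ⟨i, j, hd, rfl⟩ | ⟨i, j, hs, rfl⟩)
  · exact Or.inl ⟨i.castSucc, by simp⟩
  · exact Or.inr (Or.inl ⟨i.castSucc, j.castSucc, by simpa using hd, by simp⟩)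
  · exact Or.inr (Or.inr ⟨i.castSucc, j.castSucc, by simpa using hs, by simp⟩)

def castSuccHom (m : ℕ) : PresentedGroup (symmRels m) →* PresentedGroup (symmRels (m + 1)) :=
  PresentedGroup.map _ castSucc_mapsTo

theorem gen_mem_range_castSuccHom {i : ℕ} (h : i < m) : gen (m + 1) i ∈ (castSuccHom m).range :=
  ⟨of ⟨i, h⟩, by rw [gen_of_lt (by omega)]; rfl⟩

-- `g_m g_{m-1} ⋯ g_k`, empty for `k = m + 1`
def cosetRep (m k : ℕ) : PresentedGroup (symmRels (m + 1)) :=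
  descProd (gen (m + 1)) k (m + 1 - k)

theorem cosetRep_mul_gen {k i : ℕ} (hk : k ≤ m + 1) (hi : i ≤ m) :
    ∃ h ∈ (castSuccHom m).range, ∃ k' ≤ m + 1,
      cosetRep m k * gen (m + 1) i = h * cosetRep m k' := by
  obtain hik | rfl | rfl | hki : i + 2 ≤ k ∨ i + 1 = k ∨ i = k ∨ k < i := by omega
  · refine ⟨gen (m + 1) i, gen_mem_range_castSuccHom (by omega), k, hk, ?_⟩
    exact (Commute.descProd_right _ fun j hj _ ↦ commute_gen (by omega)).symm.eq
  · refine ⟨1, one_mem _, i, by omega, ?_⟩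
    rw [one_mul, cosetRep, cosetRep, show m + 1 - i = m - i + 1 by omega, descProd_succ',
      show m + 1 - (i + 1) = m - i by omega]
  · refine ⟨1, one_mem _, i + 1, by omega, ?_⟩
    rw [one_mul, cosetRep, cosetRep, show m + 1 - i = m - i + 1 by omega, descProd_succ',
      mul_assoc, gen_mul_self, mul_one, show m + 1 - (i + 1) = m - i by omega]
  · obtain ⟨l, rfl⟩ : ∃ l, i = k + l + 1 := ⟨i - k - 1, by omega⟩
    refine ⟨gen (m + 1) (k + l), gen_mem_range_castSuccHom (by omega), k, hk, ?_⟩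
    exact descProd_mul_of_braid _ (by omega) (fun _ _ ↦ commute_gen) (gen_braid (by omega))

theorem exists_mem_range_mul_cosetRep (g : PresentedGroup (symmRels (m + 1))) :
    ∃ h ∈ (castSuccHom m).range, ∃ k ≤ m + 1, g = h * cosetRep m k := by
  have step : ∀ (x : PresentedGroup (symmRels (m + 1))) (i : Fin (m + 1)),
      (∃ h ∈ (castSuccHom m).range, ∃ k ≤ m + 1, x = h * cosetRep m k) →
      ∃ h ∈ (castSuccHom m).range, ∃ k ≤ m + 1, x * of i = h * cosetRep m k := by
    rintro _ i ⟨h, hh, k, hk, rfl⟩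
    obtain ⟨h', hh', k', hk', e⟩ := cosetRep_mul_gen hk i.is_le
    refine ⟨h * h', mul_mem hh hh', k', hk', ?_⟩
    rw [mul_assoc, ← gen_of_lt i.isLt, e, mul_assoc]
  have hg : g ∈ Subgroup.closure (Set.range of) := by rw [closure_range_of]; trivial
  induction hg using Subgroup.closure_induction_right with
  | one => exact ⟨1, one_mem _, m + 1, le_rfl, by simp [cosetRep, descProd]⟩
  | mul_right x _ _ hy ih =>
    obtain ⟨i, rfl⟩ := hy
    exact step x i ih
  | mul_inv_cancel x _ _ hy ih =>
    obtain ⟨i, rfl⟩ := hy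
    rw [inv_eq_of_mul_eq_one_right (of_mul_self i)]
    exact step x i ih

theorem surjective_mul_cosetRep :
    Function.Surjective fun p : (castSuccHom m).range × Fin (m + 2) ↦
      (p.1 : PresentedGroup (symmRels (m + 1))) * cosetRep m p.2 := by
  intro g
  obtain ⟨h, hh, k, hk, rfl⟩ := exists_mem_range_mul_cosetRep g
  exact ⟨(⟨h, hh⟩, ⟨k, by omega⟩), rfl⟩

theorem finite_succ [Finite (PresentedGroup (symmRels m))] :
    Finite (PresentedGroup (symmRels (m + 1))) :=
  have := Finite.of_surjective _ (castSuccHom m).rangeRestrict_surjective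
  Finite.of_surjective _ surjective_mul_cosetRep

theorem card_succ_le [Finite (PresentedGroup (symmRels m))] :
    Nat.card (PresentedGroup (symmRels (m + 1))) ≤
      Nat.card (PresentedGroup (symmRels m)) * (m + 2) := by
  have := Finite.of_surjective _ (castSuccHom m).rangeRestrict_surjective
  calc Nat.card (PresentedGroup (symmRels (m + 1)))
      ≤ Nat.card ((castSuccHom m).range × Fin (m + 2)) :=
        Nat.card_le_card_of_surjective _ surjective_mul_cosetRep
    _ = Nat.card (castSuccHom m).range * (m + 2) := by rw [Nat.card_prod, Nat.card_fin]
    _ ≤ Nat.card (PresentedGroup (symmRels m)) * (m + 2) :=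
        Nat.mul_le_mul_right _
          (Nat.card_le_card_of_surjective _ (castSuccHom m).rangeRestrict_surjective)

theorem finite_and_card_le_factorial (m : ℕ) :
    Finite (PresentedGroup (symmRels m)) ∧ Nat.card (PresentedGroup (symmRels m)) ≤ (m + 1)! := by
  induction m with
  | zero =>
    have eq_one (x : PresentedGroup (symmRels 0)) : x = 1 :=
      Subgroup.mem_bot.mp (generated_by _ ⊥ (fun j ↦ j.elim0) x)
    have : Subsingleton (PresentedGroup (symmRels 0)) :=
      ⟨fun a b ↦ (eq_one a).trans (eq_one b).symm⟩
    exact ⟨Finite.of_subsingleton, (Nat.card_of_subsingleton 1).le⟩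
  | succ m ih =>
    obtain ⟨_, hcard⟩ := ih
    refine ⟨finite_succ, card_succ_le.trans ?_⟩
    rw [Nat.factorial_succ (m + 1), mul_comm (m + 1 + 1)]
    exact Nat.mul_le_mul_right _ hcard

end symmRels

/-- The group presented by generators `g₀, …, g_{m-1}` subject to `gᵢ² = 1`,
`gᵢgⱼ = gⱼgᵢ` for `|i - j| ≥ 2` and `gᵢg_{i+1}gᵢ = g_{i+1}gᵢg_{i+1}` is isomorphic to
the symmetric group on `Fin (m+1)`, via `gᵢ ↦ (i, i+1)`.  (Here `n = m + 1 ≥ 1`.) -/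
theorem presentedGroup_symmetricGroup (m : ℕ) :
    ∃ φ : PresentedGroup (symmRels m) →* Equiv.Perm (Fin (m + 1)),
      (∀ i : Fin m, φ (PresentedGroup.of i) = Equiv.swap i.castSucc i.succ) ∧
      Function.Bijective φ := by
  obtain ⟨_, hcard⟩ := symmRels.finite_and_card_le_factorial m
  refine ⟨symmRels.toPerm m, symmRels.toPerm_of,
    (symmRels.toPerm_surjective m).bijective_of_nat_card_le ?_⟩
  rwa [Nat.card_perm, Nat.card_fin]
end
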